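/- arXiv:2407.04705 — 6 statements merged into one kernel-verified Lean document; each statement's English description precedes it below -/
import Mathlib

section
/- (Initial value theorem for the Laplace transform.) Let f : ℝ → ℝ be continuous on [0,∞) and of exponential order δ, i.e. there exist M, δ > 0 with |f(t)| ≤ M·e^(δt) for all t ≥ 0. Then the limit as s → ∞ of s · ∫_0^∞ f(t)·e^(−st) dt equals f(0): Tendsto (fun s => s · ∫_0^∞ f(t)·e^(−st) dt) atTop (𝓝 (f 0)). -/
open MeasureTheory Real Filter

/-- Initial value theorem for the Laplace transform. -/
theorem laplace_initial_value (f : ℝ → ℝ) (hf : ContinuousOn f (Set.Ici 0))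
    (M δ : ℝ) (hM : 0 < M) (hδ : 0 < δ)
    (hbound : ∀ t ≥ (0:ℝ), |f t| ≤ M * Real.exp (δ * t)) :
    Tendsto (fun s : ℝ => s * ∫ t in Set.Ioi (0:ℝ), f t * Real.exp (-s * t))
      atTop (nhds (f 0)) := by
  -- substitution: for s > 0, s * ∫ f t e^{-st} = ∫ f(x/s) e^{-x}
  have key : ∀ s : ℝ, 0 < s →
      s * ∫ t in Set.Ioi (0:ℝ), f t * Real.exp (-s * t)
      = ∫ x in Set.Ioi (0:ℝ), f (x / s) * Real.exp (-x) := by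
    intro s hs
    have h := MeasureTheory.integral_comp_mul_left_Ioi
      (fun x => f (x / s) * Real.exp (-x)) 0 hs
    simp only [mul_zero] at h
    have heq : (∫ t in Set.Ioi (0:ℝ), f t * Real.exp (-s * t))
        = ∫ t in Set.Ioi (0:ℝ), f ((s * t) / s) * Real.exp (-(s * t)) := by
      congr 1
      ext t
      rw [mul_div_cancel_left₀ _ hs.ne', neg_mul]
    rw [heq, h, smul_eq_mul, ← mul_assoc, mul_inv_cancel₀ hs.ne', one_mul]
  have hmain : Tendsto (fun s : ℝ => ∫ x in Set.Ioi (0:ℝ), f (x / s) * Real.exp (-x))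
      atTop (nhds (f 0)) := by
    have h0 : (f 0 : ℝ) = ∫ x in Set.Ioi (0:ℝ), f 0 * Real.exp (-x) := by
      rw [MeasureTheory.integral_const_mul, integral_exp_neg_Ioi_zero, mul_one]
    rw [h0]
    apply MeasureTheory.tendsto_integral_filter_of_dominated_convergence
      (fun x => M * Real.exp (-(1/2) * x))
    · -- measurability
      filter_upwards [eventually_gt_atTop 0] with s hs
      apply ContinuousOn.aestronglyMeasurable _ measurableSet_Ioi
      apply ContinuousOn.mul
      · apply hf.comp (continuousOn_id.div_const s)
        intro x hx
        exact le_of_lt (div_pos hx hs)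
      · exact (Real.continuous_exp.comp continuous_neg).continuousOn
    · -- bound
      filter_upwards [eventually_ge_atTop (2 * δ), eventually_gt_atTop 0] with s hs hs0
      refine (MeasureTheory.ae_restrict_iff' measurableSet_Ioi).2 (ae_of_all _ ?_)
      intro x hx
      have hx0 : (0:ℝ) < x := hx
      have hxs : (0:ℝ) ≤ x / s := le_of_lt (div_pos hx0 hs0)
      have h1 : |f (x / s)| ≤ M * Real.exp (δ * (x / s)) := hbound _ hxs
      have h2 : δ * (x / s) ≤ (1/2) * x := by
        rw [div_eq_mul_inv, ← mul_assoc]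
        have hinv : s⁻¹ ≤ (2 * δ)⁻¹ := by
          apply inv_anti₀ (by positivity) hs
        calc δ * x * s⁻¹ ≤ δ * x * (2 * δ)⁻¹ := by
              apply mul_le_mul_of_nonneg_left hinv (by positivity)
          _ = (1/2) * x := by field_simp
      have h3 : Real.exp (δ * (x / s)) ≤ Real.exp ((1/2) * x) := Real.exp_le_exp.2 h2
      calc ‖f (x / s) * Real.exp (-x)‖ = |f (x / s)| * Real.exp (-x) := by
            rw [norm_mul, Real.norm_eq_abs, Real.norm_eq_abs, Real.abs_exp]
        _ ≤ M * Real.exp ((1/2) * x) * Real.exp (-x) := by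
            apply mul_le_mul_of_nonneg_right _ (Real.exp_nonneg _)
            exact h1.trans (mul_le_mul_of_nonneg_left h3 hM.le)
        _ = M * Real.exp (-(1/2) * x) := by
            rw [mul_assoc, ← Real.exp_add]; ring_nf
    · -- integrability of bound
      exact (exp_neg_integrableOn_Ioi 0 (by norm_num : (0:ℝ) < 1/2)).const_mul M
    · -- pointwise limit
      refine (MeasureTheory.ae_restrict_iff' measurableSet_Ioi).2 (ae_of_all _ ?_)
      intro x hx
      have hx0 : (0:ℝ) < x := hx
      have hdiv : Tendsto (fun s : ℝ => x / s) atTop (nhds 0) := by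
        simpa using tendsto_const_nhds.div_atTop (tendsto_id (α := ℝ))
      have hdivw : Tendsto (fun s : ℝ => x / s) atTop (nhdsWithin 0 (Set.Ici 0)) := by
        rw [tendsto_nhdsWithin_iff]
        refine ⟨hdiv, ?_⟩
        filter_upwards [eventually_gt_atTop (0:ℝ)] with s hs
        exact le_of_lt (div_pos hx0 hs)
      have hc : Tendsto (fun s : ℝ => f (x / s)) atTop (nhds (f 0)) :=
        (hf 0 (Set.self_mem_Ici)).tendsto.comp hdivw
      exact hc.mul tendsto_const_nhds
  apply Tendsto.congr' _ hmain
  filter_upwards [eventually_gt_atTop (0:ℝ)] with s hs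
  exact (key s hs).symm
end

section
/- Let 0 < α < 1, let N ∈ ℕ, let a_0, a_1, …, a_N be real numbers, and let u(t) = Σ_{n=0}^{N} a_n · t^(nα) / Γ(1+nα). Then for every natural number k with 1 ≤ k ≤ N, the k-fold Caputo fractional derivative of order α of the square u² satisfies lim_{t→0⁺} (D^α)^[k] (u²) (t) = Σ_{m=0}^{k} (Γ(1+kα) / (Γ(1+mα)·Γ(1+(k−m)α))) · a_m · a_{k−m}. -/
open MeasureTheory Real Filter

/-- The Caputo fractional derivative of order `α ∈ (0,1)` of `f : ℝ → ℝ`. -/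
noncomputable def caputo (α : ℝ) (f : ℝ → ℝ) : ℝ → ℝ := fun t =>
  (1 / Real.Gamma (1 - α)) * ∫ τ in (0:ℝ)..t, (t - τ) ^ (-α) * deriv f τ

lemma key_integrable {α β t : ℝ} (hα : 0 < α) (hα1 : α < 1) (hβ : 0 < β) (ht : 0 < t) :
    IntervalIntegrable (fun τ => (t - τ) ^ (-α) * τ ^ (β - 1)) volume 0 t := by
  have h2 : (0:ℝ) < t / 2 := by linarith
  apply IntervalIntegrable.trans (b := t / 2)
  · -- on [0, t/2]
    apply IntervalIntegrable.continuousOn_mul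
      (intervalIntegral.intervalIntegrable_rpow' (by linarith))
    intro x hx
    rw [Set.uIcc_of_le (by linarith)] at hx
    have hne : t - x ≠ 0 := by
      have := hx.2; intro h; nlinarith [hx.1]
    exact ((Real.continuousAt_rpow_const _ _ (Or.inl hne)).comp
      ((continuous_const.sub continuous_id).continuousAt)).continuousWithinAt
  · -- on [t/2, t]
    have hbase : IntervalIntegrable (fun x : ℝ => x ^ (-α)) volume 0 (t/2) :=
      intervalIntegral.intervalIntegrable_rpow' (by linarith)
    have := hbase.comp_sub_left t
    simp only [sub_zero] at this
    have he : t - t / 2 = t / 2 := by ring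
    rw [he] at this
    apply IntervalIntegrable.mul_continuousOn
    · exact this.symm
    · intro x hx
      rw [Set.uIcc_of_le (by linarith)] at hx
      have hne : x ≠ 0 := by have := hx.1; intro h; nlinarith
      exact ((Real.continuousAt_rpow_const _ _ (Or.inl hne))).continuousWithinAt

lemma key_integral {α β t : ℝ} (hα : 0 < α) (hα1 : α < 1) (hβ : 0 < β) (ht : 0 < t) :
    ∫ τ in (0:ℝ)..t, (t - τ) ^ (-α) * τ ^ (β - 1) =
      Real.Gamma (1 - α) * Real.Gamma β / Real.Gamma (β + 1 - α) * t ^ (β - α) := by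
  have h1α : (0:ℝ) < 1 - α := by linarith
  have hΓpos : 0 < Real.Gamma (β + 1 - α) := Real.Gamma_pos_of_pos (by linarith)
  -- complex beta integral
  have hscaled := Complex.betaIntegral_scaled (β : ℂ) ((1 - α : ℝ) : ℂ) ht
  have hBG := Complex.Gamma_mul_Gamma_eq_betaIntegral
    (s := (β : ℂ)) (t := ((1 - α : ℝ) : ℂ)) (by simpa using hβ) (by simpa using h1α)
  have hsum : (β : ℂ) + ((1 - α : ℝ) : ℂ) = ((β + 1 - α : ℝ) : ℂ) := by push_cast; ring
  have hΓne : Complex.Gamma ((β + 1 - α : ℝ) : ℂ) ≠ 0 := by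
    rw [Complex.Gamma_ofReal]
    exact_mod_cast hΓpos.ne'
  have hΓne' : ((Real.Gamma (β + 1 - α) : ℝ) : ℂ) ≠ 0 := by exact_mod_cast hΓpos.ne'
  have hB : Complex.betaIntegral (β : ℂ) ((1 - α : ℝ) : ℂ) =
      ((Real.Gamma β * Real.Gamma (1 - α) / Real.Gamma (β + 1 - α) : ℝ) : ℂ) := by
    rw [hsum] at hBG
    rw [Complex.Gamma_ofReal, Complex.Gamma_ofReal, Complex.Gamma_ofReal] at hBG
    rw [Complex.ofReal_div, Complex.ofReal_mul, eq_div_iff hΓne']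
    rw [eq_comm, mul_comm] at hBG
    exact hBG
  -- identify the real integral with the complex one
  have hre : ((∫ τ in (0:ℝ)..t, (t - τ) ^ (-α) * τ ^ (β - 1) : ℝ) : ℂ) =
      ∫ τ in (0:ℝ)..t, ((τ : ℂ)) ^ ((β : ℂ) - 1) * (((t : ℝ) : ℂ) - τ) ^ (((1 - α : ℝ) : ℂ) - 1) := by
    rw [← intervalIntegral.integral_ofReal]
    apply intervalIntegral.integral_congr_ae
    filter_upwards [] with τ hτ
    rw [Set.uIoc_of_le ht.le] at hτ
    have hτ0 : 0 < τ := hτ.1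
    have htτ : 0 ≤ t - τ := by linarith [hτ.2]
    have e1 : ((β : ℂ) - 1) = ((β - 1 : ℝ) : ℂ) := by push_cast; ring
    have e2 : (((1 - α : ℝ) : ℂ) - 1) = ((-α : ℝ) : ℂ) := by push_cast; ring
    rw [e1, e2, ← Complex.ofReal_cpow hτ0.le, show ((t:ℝ):ℂ) - (τ:ℂ) = ((t - τ : ℝ):ℂ) by push_cast; ring,
      ← Complex.ofReal_cpow htτ]
    push_cast
    ring
  rw [hscaled, hB] at hre
  have hexp : (β : ℂ) + ((1 - α : ℝ) : ℂ) - 1 = ((β - α : ℝ) : ℂ) := by push_cast; ring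
  rw [hexp, ← Complex.ofReal_cpow ht.le, ← Complex.ofReal_mul] at hre
  have := Complex.ofReal_inj.mp hre
  rw [this]; ring

/-- fractional polynomial with coefficients `c`, length `M` -/
noncomputable def fpoly (α : ℝ) (c : ℕ → ℝ) (M : ℕ) : ℝ → ℝ := fun t =>
  ∑ j ∈ Finset.range M, c j * t ^ ((j : ℝ) * α)

noncomputable def shiftC (α : ℝ) (c : ℕ → ℝ) : ℕ → ℝ := fun j =>
  c (j + 1) * (Real.Gamma (1 + ((j : ℝ) + 1) * α) / Real.Gamma (1 + (j : ℝ) * α))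

lemma fpoly_hasDerivAt {α : ℝ} (c : ℕ → ℝ) (M : ℕ) {τ : ℝ} (hτ : 0 < τ) :
    HasDerivAt (fpoly α c M)
      (∑ j ∈ Finset.range M, c j * (((j : ℝ) * α) * τ ^ ((j : ℝ) * α - 1))) τ := by
  apply HasDerivAt.fun_sum
  intro j _
  exact (Real.hasDerivAt_rpow_const (Or.inl hτ.ne')).const_mul (c j)

lemma deriv_fpoly {α : ℝ} (c : ℕ → ℝ) (M : ℕ) {τ : ℝ} (hτ : 0 < τ) :
    deriv (fpoly α c M) τ =
      ∑ j ∈ Finset.range M, c j * (((j : ℝ) * α) * τ ^ ((j : ℝ) * α - 1)) :=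
  (fpoly_hasDerivAt c M hτ).deriv

lemma caputo_fpoly {α : ℝ} (hα : 0 < α) (hα1 : α < 1) (c : ℕ → ℝ) (L : ℕ)
    (hc : c (L + 1) = 0) :
    Set.EqOn (caputo α (fpoly α c (L + 1))) (fpoly α (shiftC α c) (L + 1)) (Set.Ioi 0) := by
  intro t ht
  have ht : 0 < t := ht
  have hΓ1α : Real.Gamma (1 - α) ≠ 0 := (Real.Gamma_pos_of_pos (by linarith)).ne'
  have hcongr : ∫ τ in (0:ℝ)..t, (t - τ) ^ (-α) * deriv (fpoly α c (L+1)) τ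
      = ∫ τ in (0:ℝ)..t, ∑ j ∈ Finset.range (L+1),
          c j * ((j:ℝ)*α) * ((t - τ) ^ (-α) * τ ^ ((j:ℝ)*α - 1)) := by
    apply intervalIntegral.integral_congr_ae
    filter_upwards [] with τ hτ
    rw [Set.uIoc_of_le ht.le] at hτ
    rw [deriv_fpoly c _ hτ.1, Finset.mul_sum]
    exact Finset.sum_congr rfl fun j _ => by ring
  have hint : ∀ j ∈ Finset.range (L+1), IntervalIntegrable
      (fun τ => c j * ((j:ℝ)*α) * ((t - τ) ^ (-α) * τ ^ ((j:ℝ)*α - 1))) volume 0 t := by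
    intro j _
    rcases Nat.eq_zero_or_pos j with rfl | hj
    · simpa using intervalIntegrable_const (c := (0:ℝ)) (μ := volume) (a := (0:ℝ)) (b := t)
    · have hβ : 0 < (j:ℝ) * α := by
        have : (1:ℝ) ≤ (j:ℝ) := by exact_mod_cast hj
        nlinarith
      exact (key_integrable hα hα1 hβ ht).const_mul _
  show (1 / Real.Gamma (1 - α)) * _ = _
  rw [hcongr, intervalIntegral.integral_finset_sum hint, Finset.mul_sum]
  have hR : fpoly α (shiftC α c) (L+1) t
      = ∑ i ∈ Finset.range L, shiftC α c i * t ^ ((i:ℝ)*α) := by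
    rw [fpoly, Finset.sum_range_succ]
    simp [shiftC, hc]
  rw [hR, Finset.sum_range_succ']
  have h0 : (1 / Real.Gamma (1 - α)) *
      ∫ τ in (0:ℝ)..t, c 0 * ((0:ℕ):ℝ)*α * ((t - τ) ^ (-α) * τ ^ (((0:ℕ):ℝ)*α - 1)) = 0 := by
    simp
  rw [show ((0:ℕ):ℝ) * α = 0 by simp] at *
  simp only [Nat.cast_zero, zero_mul, mul_zero, zero_mul, intervalIntegral.integral_zero,
    add_zero]
  apply Finset.sum_congr rfl
  intro i _
  have hβ : 0 < ((i:ℝ)+1) * α := by positivity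
  have hcast : ((i+1 : ℕ) : ℝ) = (i:ℝ) + 1 := by push_cast; ring
  rw [intervalIntegral.integral_const_mul, hcast, key_integral hα hα1 hβ ht]
  have e1 : ((i:ℝ)+1)*α - α = (i:ℝ)*α := by ring
  have e2 : ((i:ℝ)+1)*α + 1 - α = 1 + (i:ℝ)*α := by ring
  rw [e1, e2, shiftC]
  have e3 : Real.Gamma (1 + ((i:ℝ)+1)*α) = (((i:ℝ)+1)*α) * Real.Gamma (((i:ℝ)+1)*α) := by
    rw [add_comm, Real.Gamma_add_one hβ.ne']
  rw [e3]
  field_simp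

lemma caputo_congr {α : ℝ} {f g : ℝ → ℝ} (h : Set.EqOn f g (Set.Ioi 0)) :
    Set.EqOn (caputo α f) (caputo α g) (Set.Ioi 0) := by
  intro t ht
  have ht : (0:ℝ) < t := ht
  unfold caputo
  congr 1
  apply intervalIntegral.integral_congr_ae
  filter_upwards [] with τ hτ
  rw [Set.uIoc_of_le ht.le] at hτ
  have : f =ᶠ[nhds τ] g :=
    Filter.eventuallyEq_of_mem (isOpen_Ioi.mem_nhds hτ.1) h
  rw [this.deriv_eq]

lemma caputo_iter_congr {α : ℝ} (k : ℕ) {f g : ℝ → ℝ} (h : Set.EqOn f g (Set.Ioi 0)) :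
    Set.EqOn ((caputo α)^[k] f) ((caputo α)^[k] g) (Set.Ioi 0) := by
  induction k generalizing f g with
  | zero => simpa using h
  | succ n ih => rw [Function.iterate_succ_apply, Function.iterate_succ_apply]
                 exact ih (caputo_congr h)

lemma shiftC_supp {α : ℝ} {c : ℕ → ℝ} {L : ℕ} (h : ∀ j, L ≤ j → c j = 0) :
    ∀ j, L ≤ j → shiftC α c j = 0 := by
  intro j hj
  rw [shiftC, h (j+1) (by omega), zero_mul]

lemma caputo_iter_fpoly {α : ℝ} (hα : 0 < α) (hα1 : α < 1) (k : ℕ) (c : ℕ → ℝ) (L : ℕ)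
    (hc : ∀ j, L + 1 ≤ j → c j = 0) :
    Set.EqOn ((caputo α)^[k] (fpoly α c (L + 1))) (fpoly α ((shiftC α)^[k] c) (L + 1))
      (Set.Ioi 0) := by
  induction k generalizing c with
  | zero => simp [Set.EqOn]
  | succ n ih =>
    rw [Function.iterate_succ_apply]
    intro t ht
    have h1 : Set.EqOn ((caputo α)^[n] (caputo α (fpoly α c (L+1))))
        ((caputo α)^[n] (fpoly α (shiftC α c) (L+1))) (Set.Ioi 0) :=
      caputo_iter_congr n (caputo_fpoly hα hα1 c L (hc (L+1) le_rfl))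
    rw [h1 ht, ih (shiftC α c) (shiftC_supp (fun j hj => hc j (by omega))) ht,
      Function.iterate_succ_apply]

lemma shiftC_iter {α : ℝ} (hα : 0 < α) (k : ℕ) (c : ℕ → ℝ) (j : ℕ) :
    (shiftC α)^[k] c j = c (j + k) *
      (Real.Gamma (1 + ((j:ℝ) + (k:ℝ)) * α) / Real.Gamma (1 + (j:ℝ) * α)) := by
  induction k generalizing c j with
  | zero =>
    simp [div_self (Real.Gamma_pos_of_pos (by positivity : (0:ℝ) < 1 + (j:ℝ)*α)).ne']
  | succ n ih =>
    rw [Function.iterate_succ_apply, ih (shiftC α c) j, shiftC]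
    have hne : Real.Gamma (1 + ((j:ℝ) + (n:ℝ)) * α) ≠ 0 :=
      (Real.Gamma_pos_of_pos (by positivity)).ne'
    have hne2 : Real.Gamma (1 + (j:ℝ) * α) ≠ 0 :=
      (Real.Gamma_pos_of_pos (by positivity)).ne'
    have e1 : j + n + 1 = j + (n+1) := by omega
    rw [e1]
    push_cast
    have key : Real.Gamma (1 + ((j:ℝ) + (n:ℝ) + 1) * α) / Real.Gamma (1 + ((j:ℝ) + (n:ℝ)) * α) *
        (Real.Gamma (1 + ((j:ℝ) + (n:ℝ)) * α) / Real.Gamma (1 + (j:ℝ) * α)) =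
        Real.Gamma (1 + ((j:ℝ) + (n:ℝ) + 1) * α) / Real.Gamma (1 + (j:ℝ) * α) := by
      field_simp
    rw [mul_assoc, key]
    ring_nf
lemma tendsto_fpoly {α : ℝ} (hα : 0 < α) (c : ℕ → ℝ) (M : ℕ) :
    Tendsto (fpoly α c (M + 1)) (nhdsWithin 0 (Set.Ioi 0)) (nhds (c 0)) := by
  have h : Tendsto (fpoly α c (M + 1)) (nhdsWithin 0 (Set.Ioi 0))
      (nhds (∑ j ∈ Finset.range (M+1), (if j = 0 then c 0 else 0))) := by
    apply tendsto_finset_sum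
    intro j _
    rcases Nat.eq_zero_or_pos j with rfl | hj
    · simpa using tendsto_const_nhds
    · have hp : 0 < (j:ℝ) * α := by
        have : (1:ℝ) ≤ (j:ℝ) := by exact_mod_cast hj
        nlinarith
      simp only [if_neg hj.ne']
      have hcont : ContinuousAt (fun x : ℝ => x ^ ((j:ℝ)*α)) 0 :=
        Real.continuousAt_rpow_const 0 _ (Or.inr hp.le)
      have h0 : (0:ℝ) ^ ((j:ℝ)*α) = 0 := Real.zero_rpow hp.ne'
      have := (hcont.tendsto.mono_left (nhdsWithin_le_nhds (s := Set.Ioi (0:ℝ)))).const_mul (c j)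
      rw [h0, mul_zero] at this
      exact this
  convert h using 2
  rw [Finset.sum_range_succ']
  simp

lemma triangle_sum {M : ℕ} (F : ℕ → ℕ → ℝ) (hF : ∀ n m, M ≤ n + m → F n m = 0) :
    ∑ n ∈ Finset.range M, ∑ m ∈ Finset.range M, F n m
      = ∑ j ∈ Finset.range M, ∑ m ∈ Finset.range (j + 1), F m (j - m) := by
  rw [← Finset.sum_product', Finset.sum_sigma']
  rw [← Finset.sum_filter_of_ne (p := fun p : ℕ × ℕ => p.1 + p.2 < M)
    (fun p _ h => by by_contra hc; exact h (hF p.1 p.2 (by omega)))]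
  apply Finset.sum_nbij' (i := fun p => ⟨p.1 + p.2, p.1⟩)
    (j := fun s => (s.2, s.1 - s.2))
  · intro p hp
    simp only [Finset.mem_filter, Finset.mem_product, Finset.mem_range] at hp
    simp only [Finset.mem_sigma, Finset.mem_range]
    omega
  · intro s hs
    simp only [Finset.mem_sigma, Finset.mem_range] at hs
    by_cases h : s.2 ≤ s.1 ∧ s.2 < M ∧ s.1 - s.2 < M
    · simp only [Finset.mem_filter, Finset.mem_product, Finset.mem_range]
      omega
    · exfalso
      omega
  · intro p hp; simp
  · intro s hs
    simp only [Finset.mem_sigma, Finset.mem_range] at hs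
    ext <;> simp <;> omega
  · intro p hp; simp

theorem caputo_iter_sq_fracPolynomial (α : ℝ) (hα : 0 < α) (hα1 : α < 1)
    (N : ℕ) (a : ℕ → ℝ) (u : ℝ → ℝ)
    (hu : u = fun t : ℝ => ∑ n ∈ Finset.range (N + 1),
      a n * t ^ ((n : ℝ) * α) / Real.Gamma (1 + (n : ℝ) * α))
    (k : ℕ) (hk1 : 1 ≤ k) (hkN : k ≤ N) :
    Tendsto ((caputo α)^[k] fun t => (u t) ^ 2) (nhdsWithin 0 (Set.Ioi 0))
      (nhds (∑ m ∈ Finset.range (k + 1),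
        Real.Gamma (1 + (k : ℝ) * α) /
            (Real.Gamma (1 + (m : ℝ) * α) * Real.Gamma (1 + ((k : ℝ) - (m : ℝ)) * α)) *
          a m * a (k - m))) := by
  set A : ℕ → ℝ := fun n => if n ≤ N then a n else 0 with hA
  set c : ℕ → ℝ := fun j => ∑ m ∈ Finset.range (j + 1),
    A m * A (j - m) / (Real.Gamma (1 + (m:ℝ) * α) * Real.Gamma (1 + ((j - m : ℕ):ℝ) * α))
    with hc
  have hsupp : ∀ j, 2 * N + 1 ≤ j → c j = 0 := by
    intro j hj
    rw [hc]
    apply Finset.sum_eq_zero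
    intro m hm
    rw [Finset.mem_range] at hm
    rcases le_or_gt m N with h1 | h1
    · have : ¬ (j - m ≤ N) := by omega
      simp [hA, this]
    · have : ¬ (m ≤ N) := by omega
      simp [hA, this]
  have hEq : Set.EqOn (fun t => (u t) ^ 2) (fpoly α c (2 * N + 1)) (Set.Ioi 0) := by
    intro t ht
    have ht : (0:ℝ) < t := ht
    have hu2 : u t = ∑ n ∈ Finset.range (2 * N + 1),
        A n * t ^ ((n : ℝ) * α) / Real.Gamma (1 + (n : ℝ) * α) := by
      rw [hu]
      rw [← Finset.sum_subset (Finset.range_subset_range.mpr (by omega : N + 1 ≤ 2 * N + 1))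
        (fun n _ hn => by
          rw [Finset.mem_range, not_lt] at hn
          have : ¬ (n ≤ N) := by omega
          simp [hA, this])]
      apply Finset.sum_congr rfl
      intro n hn
      rw [Finset.mem_range] at hn
      have : n ≤ N := by omega
      simp [hA, this]
    show (u t) ^ 2 = _
    rw [hu2, sq, Finset.sum_mul_sum]
    have step : ∀ n m : ℕ,
        (A n * t ^ ((n : ℝ) * α) / Real.Gamma (1 + (n : ℝ) * α)) *
        (A m * t ^ ((m : ℝ) * α) / Real.Gamma (1 + (m : ℝ) * α))
        = A n * A m / (Real.Gamma (1 + (n:ℝ) * α) * Real.Gamma (1 + (m:ℝ) * α))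
            * t ^ (((n + m : ℕ):ℝ) * α) := by
      intro n m
      have : t ^ (((n + m : ℕ):ℝ) * α) = t ^ ((n : ℝ) * α) * t ^ ((m : ℝ) * α) := by
        rw [← Real.rpow_add ht]
        push_cast
        ring_nf
      rw [this]
      ring
    rw [Finset.sum_congr rfl (fun n _ => Finset.sum_congr rfl (fun m _ => step n m))]
    rw [triangle_sum (fun n m => A n * A m /
        (Real.Gamma (1 + (n:ℝ) * α) * Real.Gamma (1 + (m:ℝ) * α)) * t ^ (((n + m : ℕ):ℝ) * α))
      (fun n m hnm => by
        rcases le_or_gt n N with h1 | h1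
        · have : ¬ (m ≤ N) := by omega
          simp [hA, this]
        · have : ¬ (n ≤ N) := by omega
          simp [hA, this])]
    rw [fpoly]
    apply Finset.sum_congr rfl
    intro j hj
    rw [hc, Finset.sum_mul]
    apply Finset.sum_congr rfl
    intro m hm
    rw [Finset.mem_range] at hm
    have : m + (j - m) = j := by omega
    rw [this]
  -- now transfer the limit
  have h2 : Set.EqOn ((caputo α)^[k] fun t => (u t) ^ 2)
      (fpoly α ((shiftC α)^[k] c) (2 * N + 1)) (Set.Ioi 0) := by
    intro t ht
    rw [caputo_iter_congr k hEq ht, caputo_iter_fpoly hα hα1 k c (2 * N) hsupp ht]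
  have h3 : Tendsto (fpoly α ((shiftC α)^[k] c) (2 * N + 1)) (nhdsWithin 0 (Set.Ioi 0))
      (nhds (((shiftC α)^[k] c) 0)) := tendsto_fpoly hα _ (2 * N)
  have h4 : ((shiftC α)^[k] c) 0 = ∑ m ∈ Finset.range (k + 1),
      Real.Gamma (1 + (k : ℝ) * α) /
          (Real.Gamma (1 + (m : ℝ) * α) * Real.Gamma (1 + ((k : ℝ) - (m : ℝ)) * α)) *
        a m * a (k - m) := by
    rw [shiftC_iter hα, hc]
    simp only [Nat.cast_zero, zero_add, zero_mul, add_zero, Real.Gamma_one, div_one]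
    rw [Finset.sum_mul]
    apply Finset.sum_congr rfl
    intro m hm
    rw [Finset.mem_range] at hm
    have hm' : m ≤ k := by omega
    have hAm : A m = a m := by simp [hA, show m ≤ N by omega]
    have hAkm : A (k - m) = a (k - m) := by simp [hA, show k - m ≤ N by omega]
    have hcast : ((k - m : ℕ) : ℝ) = (k : ℝ) - (m : ℝ) := by
      rw [Nat.cast_sub hm']
    rw [hAm, hAkm, hcast]
    ring
  rw [← h4]
  apply h3.congr'
  filter_upwards [self_mem_nhdsWithin] with t ht
  exact (h2 ht).symm
end

section
/- Let ν > 0, ω > 0, λ ∈ ℝ, set a = √(ν/ω), and define f : ℝ → ℝ by f(x) = (2λ²/(3ν)) · (1 − cosh(a·x/2)). Then for every x ∈ ℝ, ν · (d²/dx²)(f²)(x) − ω · (d⁴/dx⁴)(f²)(x) = −(λ⁴/(6ω)) · cosh(a·x/2), where d²/dx² and d⁴/dx⁴ denote the second and fourth classical derivatives. -/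
open Real

private lemma hd_cosh (B b : ℝ) (x : ℝ) :
    HasDerivAt (fun x => B * Real.cosh (b * x)) ((B * b) * Real.sinh (b * x)) x := by
  have h1 : HasDerivAt (fun x : ℝ => b * x) b x := by
    simpa using (hasDerivAt_id x).const_mul b
  have := (h1.cosh).const_mul B
  exact this.congr_deriv (by ring)

private lemma hd_sinh (B b : ℝ) (x : ℝ) :
    HasDerivAt (fun x => B * Real.sinh (b * x)) ((B * b) * Real.cosh (b * x)) x := by
  have h1 : HasDerivAt (fun x : ℝ => b * x) b x := by
    simpa using (hasDerivAt_id x).const_mul b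
  have := (h1.sinh).const_mul B
  exact this.congr_deriv (by ring)

private lemma deriv_coshconst (A B D b : ℝ) :
    deriv (fun x => A + B * Real.cosh (b * x) + D * Real.cosh (2 * b * x)) =
      fun x => (B * b) * Real.sinh (b * x) + (D * (2 * b)) * Real.sinh (2 * b * x) := by
  funext x
  exact (((hasDerivAt_const x A).add (hd_cosh B b x)).add (hd_cosh D (2 * b) x)).deriv.trans
    (by ring)

private lemma deriv_sinhform (P Q b : ℝ) :
    deriv (fun x => P * Real.sinh (b * x) + Q * Real.sinh (2 * b * x)) =
      fun x => (P * b) * Real.cosh (b * x) + (Q * (2 * b)) * Real.cosh (2 * b * x) := by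
  funext x
  exact ((hd_sinh P b x).add (hd_sinh Q (2 * b) x)).deriv

private lemma deriv_coshform (P Q b : ℝ) :
    deriv (fun x => P * Real.cosh (b * x) + Q * Real.cosh (2 * b * x)) =
      fun x => (P * b) * Real.sinh (b * x) + (Q * (2 * b)) * Real.sinh (2 * b * x) := by
  funext x
  exact ((hd_cosh P b x).add (hd_cosh Q (2 * b) x)).deriv

theorem klein_gordon_phi2 (ν ω lam : ℝ) (hν : 0 < ν) (hω : 0 < ω)
    (a : ℝ) (ha : a = Real.sqrt (ν / ω)) (f : ℝ → ℝ)
    (hf : f = fun x : ℝ => 2 * lam ^ 2 / (3 * ν) * (1 - Real.cosh (a * x / 2))) :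
    ∀ x : ℝ,
      ν * iteratedDeriv 2 (fun y => f y ^ 2) x - ω * iteratedDeriv 4 (fun y => f y ^ 2) x =
        -(lam ^ 4 / (6 * ω)) * Real.cosh (a * x / 2) := by
  intro x
  set C : ℝ := 2 * lam ^ 2 / (3 * ν) with hC
  set b : ℝ := a / 2 with hb
  have ha2 : a ^ 2 = ν / ω := by
    rw [ha, sq_sqrt]
    positivity
  have hνeq : ν = a ^ 2 * ω := by
    field_simp at ha2
    linarith [ha2]
  have hg : (fun y => f y ^ 2) =
      fun x => (3 * C ^ 2 / 2) + (-2 * C ^ 2) * Real.cosh (b * x)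
        + (C ^ 2 / 2) * Real.cosh (2 * b * x) := by
    funext y
    rw [hf]
    simp only []
    have h1 : a * y / 2 = b * y := by rw [hb]; ring
    have h2 : 2 * b * y = 2 * (b * y) := by ring
    rw [h1, h2, Real.cosh_two_mul]
    nlinarith [Real.cosh_sq (b * y), Real.sinh_sq (b * y)]
  rw [hg]
  have h2d : ∀ g : ℝ → ℝ, iteratedDeriv 2 g = deriv (deriv g) := by
    intro g
    simp only [show (2 : ℕ) = 1 + 1 from rfl, iteratedDeriv_succ, iteratedDeriv_one, iteratedDeriv_zero]
  have h4d : ∀ g : ℝ → ℝ, iteratedDeriv 4 g = deriv (deriv (deriv (deriv g))) := by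
    intro g
    simp only [show (4 : ℕ) = 1 + 1 + 1 + 1 from rfl, iteratedDeriv_succ, iteratedDeriv_one, iteratedDeriv_zero]
  rw [h2d, h4d]
  rw [deriv_coshconst, deriv_sinhform, deriv_coshform, deriv_sinhform]
  have harg : a * x / 2 = b * x := by rw [hb]; ring
  rw [harg]
  have haν : a ≠ 0 := by
    have : (0:ℝ) < ν / ω := by positivity
    rw [ha]
    positivity
  have hω' : ω ≠ 0 := ne_of_gt hω
  simp only [hC, hb]
  rw [hνeq]
  field_simp
  ring
end

section
/- Let ν > 0, ω > 0, λ ∈ ℝ, set a = √(ν/ω), and define f(x) = (2λ²/(3ν))·(1 − cosh(a·x/2)) and h(x) = (λ³/(3√(νω)))·sinh(a·x/2). Then for every x ∈ ℝ, ν · (d²/dx²)(2·f·h)(x) − ω · (d⁴/dx⁴)(2·f·h)(x) = (λ⁵/12) · √(ν/ω³) · sinh(a·x/2), where d²/dx² and d⁴/dx⁴ denote the second and fourth classical derivatives of the product function x ↦ 2·f(x)·h(x). -/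
open Real

/-!
With `c = a / 2`, the identity `sinh (2t) = 2 sinh t cosh t` turns `2 f h` into a combination
`A sinh (c x) - (A / 2) sinh (2 c x)`. Each `sinh (k x)` is an eigenfunction of `d²/dx²` with
eigenvalue `k²`, so `ν d²/dx² - ω d⁴/dx⁴` multiplies it by `ν k² - ω k⁴`. Since `(2c)² = ν / ω`,
this factor vanishes for `k = 2c`, and for `k = c` it equals `3 ν² / (16 ω)`.
-/

theorem Real.iteratedDeriv_even_sinh_const_mul (k : ℝ) (n : ℕ) :
    iteratedDeriv (2 * n) (fun x => sinh (k * x)) = fun x => k ^ (2 * n) * sinh (k * x) := by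
  rw [iteratedDeriv_comp_const_mul contDiff_sinh k, iteratedDeriv_even_sinh]

theorem Real.iteratedDeriv_even_linear_combination_sinh (P Q k l : ℝ) (n : ℕ) (x : ℝ) :
    iteratedDeriv (2 * n) (fun y => P * sinh (k * y) + Q * sinh (l * y)) x =
      P * k ^ (2 * n) * sinh (k * x) + Q * l ^ (2 * n) * sinh (l * x) := by
  rw [iteratedDeriv_fun_add (by fun_prop) (by fun_prop), iteratedDeriv_const_mul_field,
    iteratedDeriv_const_mul_field, iteratedDeriv_even_sinh_const_mul,
    iteratedDeriv_even_sinh_const_mul]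
  ring

theorem Real.sub_iteratedDeriv_two_four_linear_combination_sinh (ν ω P Q k l x : ℝ) :
    ν * iteratedDeriv 2 (fun y => P * sinh (k * y) + Q * sinh (l * y)) x -
        ω * iteratedDeriv 4 (fun y => P * sinh (k * y) + Q * sinh (l * y)) x =
      P * (ν * k ^ 2 - ω * k ^ 4) * sinh (k * x) + Q * (ν * l ^ 2 - ω * l ^ 4) * sinh (l * x) := by
  rw [show (4 : ℕ) = 2 * 2 from rfl, show (2 : ℕ) = 2 * 1 from rfl,
    iteratedDeriv_even_linear_combination_sinh, iteratedDeriv_even_linear_combination_sinh]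
  ring

theorem klein_gordon_phi3 (ν ω lam : ℝ) (hν : 0 < ν) (hω : 0 < ω)
    (a : ℝ) (ha : a = Real.sqrt (ν / ω)) (f h : ℝ → ℝ)
    (hf : f = fun x : ℝ => 2 * lam ^ 2 / (3 * ν) * (1 - Real.cosh (a * x / 2)))
    (hh : h = fun x : ℝ => lam ^ 3 / (3 * Real.sqrt (ν * ω)) * Real.sinh (a * x / 2)) :
    ∀ x : ℝ,
      ν * iteratedDeriv 2 (fun y => 2 * f y * h y) x -
          ω * iteratedDeriv 4 (fun y => 2 * f y * h y) x =
        lam ^ 5 / 12 * Real.sqrt (ν / ω ^ 3) * Real.sinh (a * x / 2) := by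
  intro x
  set A := 4 * lam ^ 5 / (9 * ν * √(ν * ω)) with hA
  have hprod : (fun y => 2 * f y * h y) =
      fun y => A * sinh (a / 2 * y) + -(A / 2) * sinh (a * y) := by
    funext y
    rw [hf, hh, hA, show a * y = 2 * (a / 2 * y) by ring, sinh_two_mul]
    field_simp
    ring
  have ha_sq : a ^ 2 = ν / ω := by rw [ha, sq_sqrt (by positivity)]
  have hsqrt : √(ν / ω ^ 3) = ν / (ω * √(ν * ω)) := by
    rw [sqrt_eq_iff_eq_sq (by positivity) (by positivity), div_pow, mul_pow,
      sq_sqrt (by positivity)]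
    field_simp
  rw [hprod, sub_iteratedDeriv_two_four_linear_combination_sinh, hsqrt,
    show a * x / 2 = a / 2 * x by ring]
  have hsymbol_a : ν * a ^ 2 - ω * a ^ 4 = 0 := by
    rw [show a ^ 4 = (a ^ 2) ^ 2 by ring, ha_sq]
    field_simp
    ring
  have hsymbol_half : ν * (a / 2) ^ 2 - ω * (a / 2) ^ 4 = 3 * ν ^ 2 / (16 * ω) := by
    rw [show (a / 2) ^ 4 = (a ^ 2) ^ 2 / 16 by ring, div_pow, ha_sq]
    field_simp
    ring
  have hcoeff : A * (3 * ν ^ 2 / (16 * ω)) = lam ^ 5 / 12 * (ν / (ω * √(ν * ω))) := by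
    rw [hA]
    field_simp
    ring
  rw [hsymbol_a, hsymbol_half, ← hcoeff]
  ring
end

section
/- Let 0 < α < 1 and define g : ℝ → ℝ by g(t) = (1/2)·(1 + t^α/(2^α·Γ(1+α)))² + (1/2)·(1 + t^α/Γ(1+α)). Then the Caputo fractional derivative of order α of g satisfies lim_{t→0⁺} (D^α g)(t) = 2^(−α) + 1/2. -/
open MeasureTheory Real Filter


lemma betaIntegrable {a b t : ℝ} (ha : 0 < a) (hb : 0 < b) (ht : 0 < t) :
    IntervalIntegrable (fun τ : ℝ => τ ^ (a - 1) * (t - τ) ^ (b - 1)) volume 0 t := by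
  have ht2 : (0:ℝ) < t / 2 := by linarith
  have left : ∀ u v : ℝ, 0 < u → IntervalIntegrable
      (fun τ : ℝ => τ ^ (u - 1) * (t - τ) ^ (v - 1)) volume 0 (t/2) := by
    intro u v hu
    apply IntervalIntegrable.mul_continuousOn
    · exact intervalIntegral.intervalIntegrable_rpow' (by linarith)
    · intro x hx
      rw [Set.uIcc_of_le ht2.le] at hx
      have hne : t - x ≠ 0 := by have := hx.2; intro h; nlinarith [hx.1]
      exact ((continuousAt_const.sub continuousAt_id).rpow_const
        (Or.inl hne)).continuousWithinAt
  refine (left a b ha).trans ?_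
  have h2 := ((left b a hb).comp_sub_left t)
  have key : (fun x : ℝ => (t - x) ^ (b - 1) * (t - (t - x)) ^ (a - 1))
      = fun x : ℝ => x ^ (a - 1) * (t - x) ^ (b - 1) := by
    funext x; rw [sub_sub_cancel, mul_comm]
  rw [key, sub_zero, (by ring : t - t/2 = t/2)] at h2
  exact h2.symm

lemma betaInt {a b t : ℝ} (ha : 0 < a) (hb : 0 < b) (ht : 0 < t) :
    ∫ τ in (0:ℝ)..t, τ ^ (a - 1) * (t - τ) ^ (b - 1) =
      t ^ (a + b - 1) * (Real.Gamma a * Real.Gamma b / Real.Gamma (a + b)) := by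
  have hC : ∫ x in (0:ℝ)..t, (x:ℂ) ^ ((a:ℂ) - 1) * ((t:ℂ) - x) ^ ((b:ℂ) - 1)
      = (t:ℂ) ^ ((a:ℂ) + b - 1) * Complex.betaIntegral a b :=
    Complex.betaIntegral_scaled a b ht
  have hne : Complex.Gamma ((a:ℂ) + b) ≠ 0 := by
    rw [(by push_cast; ring : (a:ℂ) + b = ((a + b : ℝ) : ℂ)), Complex.Gamma_ofReal]
    exact_mod_cast (Real.Gamma_pos_of_pos (by linarith)).ne'
  have hGamma : Complex.Gamma a * Complex.Gamma b
      = Complex.Gamma ((a:ℂ) + b) * Complex.betaIntegral a b :=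
    Complex.Gamma_mul_Gamma_eq_betaIntegral (by simpa using ha) (by simpa using hb)
  have hbeta : Complex.betaIntegral a b
      = Complex.Gamma a * Complex.Gamma b / Complex.Gamma ((a:ℂ) + b) := by
    rw [eq_div_iff hne]; rw [hGamma]; ring
  have hcongr : ∫ x in (0:ℝ)..t, ((x ^ (a - 1) * (t - x) ^ (b - 1) : ℝ) : ℂ)
      = ∫ x in (0:ℝ)..t, (x:ℂ) ^ ((a:ℂ) - 1) * ((t:ℂ) - x) ^ ((b:ℂ) - 1) := by
    apply intervalIntegral.integral_congr_ae
    filter_upwards with x hx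
    rw [Set.uIoc_of_le ht.le] at hx
    push_cast
    rw [Complex.ofReal_cpow hx.1.le, Complex.ofReal_cpow (by linarith [hx.2] : (0:ℝ) ≤ t - x)]
    push_cast; ring
  apply Complex.ofReal_injective
  rw [← intervalIntegral.integral_ofReal] at *
  rw [hcongr, hC, hbeta]
  rw [Complex.ofReal_mul, Complex.ofReal_cpow ht.le, Complex.ofReal_div, Complex.ofReal_mul,
    (by push_cast; ring : ((a:ℂ) + b - 1) = ((a + b - 1 : ℝ) : ℂ)),
    (by push_cast; ring : ((a:ℂ) + b) = ((a + b : ℝ) : ℂ)),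
    Complex.Gamma_ofReal, Complex.Gamma_ofReal, Complex.Gamma_ofReal]

theorem burgers_delay_phi2 (α : ℝ) (hα : 0 < α) (hα1 : α < 1) (g : ℝ → ℝ)
    (hg : g = fun t : ℝ =>
      1 / 2 * (1 + t ^ α / ((2:ℝ) ^ α * Real.Gamma (1 + α))) ^ 2 +
        1 / 2 * (1 + t ^ α / Real.Gamma (1 + α))) :
    Tendsto (caputo α g) (nhdsWithin 0 (Set.Ioi 0)) (nhds ((2:ℝ) ^ (-α) + 1 / 2)) := by
  have hd : 0 < Real.Gamma (1 + α) := Real.Gamma_pos_of_pos (by linarith)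
  have h2a : (0:ℝ) < (2:ℝ) ^ α := Real.rpow_pos_of_pos two_pos α
  have h1m : 0 < Real.Gamma (1 - α) := Real.Gamma_pos_of_pos (by linarith)
  set c : ℝ := (2:ℝ) ^ α * Real.Gamma (1 + α) with hc
  have hcpos : 0 < c := by positivity
  set A : ℝ := α / c + α / (2 * Real.Gamma (1 + α)) with hA
  set B : ℝ := α / c ^ 2 with hB
  set C : ℝ := B * Real.Gamma (2 * α) / Real.Gamma (1 + α) with hCdef
  have hderiv : ∀ τ : ℝ, 0 < τ →
      deriv g τ = A * τ ^ (α - 1) + B * τ ^ (2 * α - 1) := by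
    intro τ hτ
    have h0 : HasDerivAt (fun x : ℝ => x ^ α) (α * τ ^ (α - 1)) τ :=
      Real.hasDerivAt_rpow_const (Or.inl hτ.ne')
    have h1 : HasDerivAt (fun x : ℝ => 1 + x ^ α / c) (α * τ ^ (α - 1) / c) τ :=
      (h0.div_const c).const_add 1
    have h2 : HasDerivAt (fun x : ℝ => 1 + x ^ α / Real.Gamma (1 + α))
        (α * τ ^ (α - 1) / Real.Gamma (1 + α)) τ := (h0.div_const _).const_add 1
    have h3 := ((h1.pow 2).const_mul (1/2 : ℝ)).add (h2.const_mul (1/2 : ℝ))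
    rw [hg, HasDerivAt.deriv (f := fun t : ℝ => 1 / 2 * (1 + t ^ α / c) ^ 2 +
      1 / 2 * (1 + t ^ α / Real.Gamma (1 + α))) h3]
    have hτα : τ ^ α * τ ^ (α - 1) = τ ^ (2 * α - 1) := by
      rw [← Real.rpow_add hτ]; ring_nf
    rw [hA, hB, ← hτα]

    field_simp
    linear_combination (τ ^ α * Real.Gamma (1 + α) * 2 + c * Real.Gamma (1 + α) * 2) * mul_inv_cancel₀ hcpos.ne'
  have key : ∀ t : ℝ, 0 < t → caputo α g t = ((2:ℝ) ^ (-α) + 1/2) + C * t ^ α := by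
    intro t ht
    have e1 : ∫ τ in (0:ℝ)..t, (t - τ) ^ (-α) * deriv g τ
        = ∫ τ in (0:ℝ)..t, (A * (τ ^ (α - 1) * (t - τ) ^ (1 - α - 1))
            + B * (τ ^ (2 * α - 1) * (t - τ) ^ (1 - α - 1))) := by
      apply intervalIntegral.integral_congr_ae
      filter_upwards with τ hτ
      rw [Set.uIoc_of_le ht.le] at hτ
      rw [hderiv τ hτ.1, (by ring : (1:ℝ) - α - 1 = -α)]
      ring
    have i1 : IntervalIntegrable
        (fun τ : ℝ => A * (τ ^ (α - 1) * (t - τ) ^ (1 - α - 1))) volume 0 t :=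
      (betaIntegrable hα (by linarith) ht).const_mul A
    have i2 : IntervalIntegrable
        (fun τ : ℝ => B * (τ ^ (2 * α - 1) * (t - τ) ^ (1 - α - 1))) volume 0 t :=
      (betaIntegrable (by linarith) (by linarith) ht).const_mul B
    rw [caputo, e1, intervalIntegral.integral_add i1 i2,
      intervalIntegral.integral_const_mul, intervalIntegral.integral_const_mul,
      betaInt hα (by linarith) ht, betaInt (by linarith : (0:ℝ) < 2 * α) (by linarith) ht,
      (by ring : α + (1 - α) - 1 = (0:ℝ)), Real.rpow_zero,
      (by ring : α + (1 - α) = (1:ℝ)), Real.Gamma_one,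
      (by ring : 2 * α + (1 - α) - 1 = α), (by ring : 2 * α + (1 - α) = 1 + α)]
    have hΓα : Real.Gamma α = Real.Gamma (1 + α) / α := by
      rw [add_comm, Real.Gamma_add_one hα.ne']
      field_simp
    have h2neg : (2:ℝ) ^ (-α) = ((2:ℝ) ^ α)⁻¹ := Real.rpow_neg (by norm_num) α
    rw [hΓα, h2neg, hCdef, hA, hB, hc]
    field_simp
  have h0 : Tendsto (fun t : ℝ => t ^ α) (nhdsWithin 0 (Set.Ioi 0)) (nhds 0) := by
    have h := (Real.continuousAt_rpow_const 0 α (Or.inr hα.le)).tendsto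
    rw [Real.zero_rpow hα.ne'] at h
    exact h.mono_left nhdsWithin_le_nhds
  have hlim : Tendsto (fun t : ℝ => ((2:ℝ) ^ (-α) + 1/2) + C * t ^ α)
      (nhdsWithin 0 (Set.Ioi 0)) (nhds ((2:ℝ) ^ (-α) + 1/2)) := by
    have h := ((h0.const_mul C).const_add ((2:ℝ) ^ (-α) + 1/2))
    simpa using h
  refine Tendsto.congr' ?_ hlim
  filter_upwards [self_mem_nhdsWithin] with t ht
  exact (key t ht).symm
end

section
/- Let 0 < α < 1 and set c₁ = 2^(−α) + 1/2. Define g : ℝ → ℝ by g(t) = (1/2)·(1 + t^α/(2^α·Γ(1+α)) + c₁·t^(2α)/(2^(2α)·Γ(1+2α)))² + (1/2)·(1 + t^α/Γ(1+α) + c₁·t^(2α)/Γ(1+2α)). Then the 2-fold Caputo fractional derivative of order α of g satisfies lim_{t→0⁺} (D^α)^[2] g (t) = Γ(1+2α)/(2^(2α+1)·(Γ(1+α))²) + (2^(−2α) + 1/2)·(2^(−α) + 1/2). -/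
open MeasureTheory Real Filter

lemma beta_cast {u v x : ℝ} (hx : 0 ≤ x) (hx1 : x ≤ 1) :
    (x:ℂ) ^ ((u:ℂ)-1) * (1-(x:ℂ)) ^ ((v:ℂ)-1) = ((x ^ (u-1) * (1-x) ^ (v-1) : ℝ) : ℂ) := by
  rw [show ((u:ℂ)-1) = ((u-1:ℝ):ℂ) by push_cast; ring,
    show ((v:ℂ)-1) = ((v-1:ℝ):ℂ) by push_cast; ring,
    show (1 - (x:ℂ)) = ((1-x:ℝ):ℂ) by push_cast; ring,
    ← Complex.ofReal_cpow hx, ← Complex.ofReal_cpow (by linarith)]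
  push_cast; ring

lemma beta_integrable {u v : ℝ} (hu : 0 < u) (hv : 0 < v) :
    IntervalIntegrable (fun x : ℝ => x ^ (u-1) * (1-x) ^ (v-1)) volume 0 1 := by
  have hc := Complex.betaIntegral_convergent (u := (u:ℂ)) (v := (v:ℂ)) (by simpa) (by simpa)
  rw [intervalIntegrable_iff_integrableOn_Ioc_of_le zero_le_one] at hc ⊢
  have := hc.re
  refine this.congr ?_
  filter_upwards [ae_restrict_mem measurableSet_Ioc] with x hx
  rw [beta_cast hx.1.le hx.2]
  simp

lemma real_beta {u v : ℝ} (hu : 0 < u) (hv : 0 < v) :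
    ∫ x in (0:ℝ)..1, x ^ (u-1) * (1-x) ^ (v-1) = Gamma u * Gamma v / Gamma (u+v) := by
  have h := Complex.Gamma_mul_Gamma_eq_betaIntegral (s := (u:ℂ)) (t := (v:ℂ)) (by simpa) (by simpa)
  have hb : Complex.betaIntegral u v
      = ((∫ x in (0:ℝ)..1, x ^ (u-1) * (1-x) ^ (v-1) : ℝ) : ℂ) := by
    rw [Complex.betaIntegral, ← intervalIntegral.integral_ofReal]
    refine intervalIntegral.integral_congr_ae ?_
    filter_upwards with x hx
    rw [Set.uIoc_of_le zero_le_one] at hx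
    exact beta_cast hx.1.le hx.2
  rw [hb, ← Complex.ofReal_add, Complex.Gamma_ofReal, Complex.Gamma_ofReal,
    Complex.Gamma_ofReal] at h
  have h' : Gamma u * Gamma v = Gamma (u+v) * ∫ x in (0:ℝ)..1, x ^ (u-1) * (1-x) ^ (v-1) := by
    exact_mod_cast h
  have hG : Gamma (u+v) ≠ 0 := (Gamma_pos_of_pos (by linarith)).ne'
  field_simp [h']
  rw [h']; ring

lemma conv_integrand_eq {α β t x : ℝ} (ht : 0 < t) (hx0 : 0 ≤ x) (hx1 : x ≤ 1) :
    (t - x*t) ^ (-α) * (x*t) ^ (β-1) = t^(β-1-α) * (x ^ (β-1) * (1-x) ^ ((1-α)-1)) := by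
  have h1 : t - x*t = (1-x)*t := by ring
  rw [h1, Real.mul_rpow (by linarith) ht.le, Real.mul_rpow hx0 ht.le,
    show (β-1-α) = -α + (β-1) by ring, Real.rpow_add ht, show ((1-α)-1) = -α by ring]
  ring

lemma conv_integrable {α β t : ℝ} (hα1 : α < 1) (hβ : 0 < β) (ht : 0 < t) :
    IntervalIntegrable (fun τ : ℝ => (t - τ) ^ (-α) * τ ^ (β-1)) volume 0 t := by
  have hb := (beta_integrable (u := β) (v := 1-α) hβ (by linarith)).const_mul (t^(β-1-α))
  have hG : IntervalIntegrable (fun x : ℝ => (t - x*t) ^ (-α) * (x*t) ^ (β-1)) volume 0 1 := by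
    rw [intervalIntegrable_iff_integrableOn_Ioc_of_le zero_le_one] at hb ⊢
    refine hb.congr ?_
    filter_upwards [ae_restrict_mem measurableSet_Ioc] with x hx
    exact (conv_integrand_eq ht hx.1.le hx.2).symm
  have h2 := hG.comp_mul_right (c := t⁻¹)
  simp only [zero_div, one_div, inv_inv] at h2
  have he : (fun x : ℝ => (t - x*t⁻¹*t) ^ (-α) * (x*t⁻¹*t) ^ (β-1))
      = fun τ : ℝ => (t - τ) ^ (-α) * τ ^ (β-1) := by
    funext x; rw [mul_assoc, inv_mul_cancel₀ (ne_of_gt ht), mul_one]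
  rwa [he] at h2

lemma conv_value {α β t : ℝ} (hα1 : α < 1) (hβ : 0 < β) (ht : 0 < t) :
    ∫ τ in (0:ℝ)..t, (t - τ) ^ (-α) * τ ^ (β-1)
      = Gamma β * Gamma (1-α) / Gamma (β + (1-α)) * t ^ (β-α) := by
  have hsub := intervalIntegral.integral_comp_mul_right (a := (0:ℝ)) (b := 1)
    (fun τ : ℝ => (t - τ) ^ (-α) * τ ^ (β-1)) (ne_of_gt ht)
  rw [zero_mul, one_mul, smul_eq_mul] at hsub
  have h1 : ∫ x in (0:ℝ)..1, (t - x*t) ^ (-α) * (x*t) ^ (β-1)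
      = t^(β-1-α) * (Gamma β * Gamma (1-α) / Gamma (β + (1-α))) := by
    rw [← real_beta hβ (by linarith : (0:ℝ) < 1-α), ← intervalIntegral.integral_const_mul]
    refine intervalIntegral.integral_congr fun x hx => ?_
    rw [Set.uIcc_of_le zero_le_one] at hx
    exact conv_integrand_eq ht hx.1 hx.2
  rw [h1] at hsub
  have h2 : (∫ τ in (0:ℝ)..t, (t - τ) ^ (-α) * τ ^ (β-1))
      = t * (t^(β-1-α) * (Gamma β * Gamma (1-α) / Gamma (β + (1-α)))) := by
    field_simp at hsub
    rw [← hsub]; ring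
  have h3 : t * t^(β-1-α) = t^(β-α) := by
    rw [show (β-α) = 1 + (β-1-α) by ring, Real.rpow_add ht, Real.rpow_one]
  rw [h2, ← mul_assoc, h3]; ring

lemma deriv_sum4 {α C A1 A2 A3 A4 : ℝ} {f : ℝ → ℝ}
    (hf : ∀ s ∈ Set.Ioi (0:ℝ), f s
      = C + A1 * s^α + A2 * s^(2*α) + A3 * s^(3*α) + A4 * s^(4*α))
    {τ : ℝ} (hτ : 0 < τ) :
    deriv f τ = (A1*α) * τ^(α-1) + (A2*(2*α)) * τ^(2*α-1)
      + (A3*(3*α)) * τ^(3*α-1) + (A4*(4*α)) * τ^(4*α-1) := by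
  have hev : f =ᶠ[nhds τ] (fun s => C + A1 * s^α + A2 * s^(2*α) + A3 * s^(3*α) + A4 * s^(4*α)) :=
    Filter.eventuallyEq_of_mem (Ioi_mem_nhds hτ) hf
  have h1 := (Real.hasDerivAt_rpow_const (x := τ) (p := α) (Or.inl hτ.ne')).const_mul A1
  have h2 := (Real.hasDerivAt_rpow_const (x := τ) (p := 2*α) (Or.inl hτ.ne')).const_mul A2
  have h3 := (Real.hasDerivAt_rpow_const (x := τ) (p := 3*α) (Or.inl hτ.ne')).const_mul A3
  have h4 := (Real.hasDerivAt_rpow_const (x := τ) (p := 4*α) (Or.inl hτ.ne')).const_mul A4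
  have hD := ((((hasDerivAt_const τ C).add h1).add h2).add h3).add h4
  rw [hev.deriv_eq]; exact hD.deriv.trans (by ring)

lemma caputo_sum4 {α : ℝ} (hα : 0 < α) (hα1 : α < 1) {C A1 A2 A3 A4 : ℝ} {f : ℝ → ℝ}
    (hf : ∀ s ∈ Set.Ioi (0:ℝ), f s
      = C + A1 * s^α + A2 * s^(2*α) + A3 * s^(3*α) + A4 * s^(4*α)) :
    ∀ t ∈ Set.Ioi (0:ℝ), caputo α f t =
      (A1 * Gamma (α+1)) + (A2 * (Gamma (2*α+1)/Gamma (α+1))) * t^α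
      + (A3 * (Gamma (3*α+1)/Gamma (2*α+1))) * t^(2*α)
      + (A4 * (Gamma (4*α+1)/Gamma (3*α+1))) * t^(3*α) + 0 * t^(4*α) := by
  intro t ht
  rw [Set.mem_Ioi] at ht
  have i1 := (conv_integrable hα1 hα ht).const_mul (A1*α)
  have i2 := (conv_integrable hα1 (show (0:ℝ) < 2*α by linarith) ht).const_mul (A2*(2*α))
  have i3 := (conv_integrable hα1 (show (0:ℝ) < 3*α by linarith) ht).const_mul (A3*(3*α))
  have i4 := (conv_integrable hα1 (show (0:ℝ) < 4*α by linarith) ht).const_mul (A4*(4*α))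
  have hint : (∫ τ in (0:ℝ)..t, (t-τ)^(-α) * deriv f τ)
      = ∫ τ in (0:ℝ)..t, ((A1*α) * ((t-τ)^(-α) * τ^(α-1)) + (A2*(2*α)) * ((t-τ)^(-α) * τ^(2*α-1))
        + (A3*(3*α)) * ((t-τ)^(-α) * τ^(3*α-1))) + (A4*(4*α)) * ((t-τ)^(-α) * τ^(4*α-1)) := by
    refine intervalIntegral.integral_congr_ae ?_
    filter_upwards with τ hτ
    rw [Set.uIoc_of_le ht.le] at hτ
    rw [deriv_sum4 hf hτ.1]
    ring
  unfold caputo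
  rw [hint, intervalIntegral.integral_add ((i1.add i2).add i3) i4,
    intervalIntegral.integral_add (i1.add i2) i3, intervalIntegral.integral_add i1 i2,
    intervalIntegral.integral_const_mul, intervalIntegral.integral_const_mul,
    intervalIntegral.integral_const_mul, intervalIntegral.integral_const_mul,
    conv_value hα1 hα ht, conv_value hα1 (show (0:ℝ) < 2*α by linarith) ht,
    conv_value hα1 (show (0:ℝ) < 3*α by linarith) ht,
    conv_value hα1 (show (0:ℝ) < 4*α by linarith) ht,
    show α+(1-α) = 1 by ring, show 2*α+(1-α) = α+1 by ring,
    show 3*α+(1-α) = 2*α+1 by ring, show 4*α+(1-α) = 3*α+1 by ring,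
    sub_self, Real.rpow_zero, show 2*α-α = α by ring, show 3*α-α = 2*α by ring,
    show 4*α-α = 3*α by ring, Real.Gamma_one]
  have g1 : Gamma (α+1) = α * Gamma α := Real.Gamma_add_one hα.ne'
  have g2 : Gamma (2*α+1) = (2*α) * Gamma (2*α) := Real.Gamma_add_one (by positivity)
  have g3 : Gamma (3*α+1) = (3*α) * Gamma (3*α) := Real.Gamma_add_one (by positivity)
  have g4 : Gamma (4*α+1) = (4*α) * Gamma (4*α) := Real.Gamma_add_one (by positivity)
  rw [g1, g2, g3, g4]
  have n0 : Gamma (1-α) ≠ 0 := (Gamma_pos_of_pos (by linarith)).ne'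
  have n1 : Gamma α ≠ 0 := (Gamma_pos_of_pos hα).ne'
  have n2 : Gamma (2*α) ≠ 0 := (Gamma_pos_of_pos (by linarith)).ne'
  have n3 : Gamma (3*α) ≠ 0 := (Gamma_pos_of_pos (by linarith)).ne'
  have nα : α ≠ 0 := hα.ne'
  field_simp
  ring

lemma tendsto_final {α K0 K1 K2 K3 K4 L : ℝ} (hα : 0 < α) {F : ℝ → ℝ}
    (hF : ∀ t ∈ Set.Ioi (0:ℝ), F t = K0 + K1 * t^α + K2 * t^(2*α) + K3 * t^(3*α) + K4 * t^(4*α))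
    (hL : L = K0) :
    Tendsto F (nhdsWithin 0 (Set.Ioi 0)) (nhds L) := by
  have hp : ∀ c : ℝ, 0 < c → Tendsto (fun t : ℝ => t ^ c) (nhdsWithin 0 (Set.Ioi 0)) (nhds 0) := by
    intro c hc
    have h := (Real.continuousAt_rpow_const 0 c (Or.inr hc.le)).tendsto
    rw [Real.zero_rpow hc.ne'] at h
    exact h.mono_left nhdsWithin_le_nhds
  have base : Tendsto (fun t : ℝ => K0 + K1 * t^α + K2 * t^(2*α) + K3 * t^(3*α) + K4 * t^(4*α))
      (nhdsWithin 0 (Set.Ioi 0)) (nhds (K0 + K1*0 + K2*0 + K3*0 + K4*0)) :=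
    (((tendsto_const_nhds.add ((hp α hα).const_mul K1)).add
      ((hp (2*α) (by linarith)).const_mul K2)).add
      ((hp (3*α) (by linarith)).const_mul K3)).add ((hp (4*α) (by linarith)).const_mul K4)
  simp only [mul_zero, add_zero] at base
  rw [hL]
  refine Filter.Tendsto.congr' ?_ base
  filter_upwards [self_mem_nhdsWithin] with t ht
  exact (hF t ht).symm

theorem burgers_delay_phi3 (α : ℝ) (hα : 0 < α) (hα1 : α < 1)
    (c₁ : ℝ) (hc₁ : c₁ = (2:ℝ) ^ (-α) + 1 / 2) (g : ℝ → ℝ)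
    (hg : g = fun t : ℝ =>
      1 / 2 * (1 + t ^ α / ((2:ℝ) ^ α * Real.Gamma (1 + α)) +
          c₁ * t ^ (2 * α) / ((2:ℝ) ^ (2 * α) * Real.Gamma (1 + 2 * α))) ^ 2 +
        1 / 2 * (1 + t ^ α / Real.Gamma (1 + α) + c₁ * t ^ (2 * α) / Real.Gamma (1 + 2 * α))) :
    Tendsto ((caputo α)^[2] g) (nhdsWithin 0 (Set.Ioi 0))
      (nhds (Real.Gamma (1 + 2 * α) / ((2:ℝ) ^ (2 * α + 1) * Real.Gamma (1 + α) ^ 2) +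
        ((2:ℝ) ^ (-(2 * α)) + 1 / 2) * ((2:ℝ) ^ (-α) + 1 / 2))) := by
  have hf_g : ∀ s ∈ Set.Ioi (0:ℝ), g s
      = 1 + (1/((2:ℝ)^α * Gamma (1+α)) + (1/Gamma (1+α))/2) * s^α
      + ((1/((2:ℝ)^α * Gamma (1+α)))^2/2 + c₁/((2:ℝ)^(2*α) * Gamma (1+2*α))
          + (c₁/Gamma (1+2*α))/2) * s^(2*α)
      + ((1/((2:ℝ)^α * Gamma (1+α))) * (c₁/((2:ℝ)^(2*α) * Gamma (1+2*α)))) * s^(3*α)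
      + ((c₁/((2:ℝ)^(2*α) * Gamma (1+2*α)))^2/2) * s^(4*α) := by
    intro s hs
    rw [Set.mem_Ioi] at hs
    rw [hg]
    have e2 : s^(2*α) = s^α * s^α := by
      rw [show 2*α = α+α by ring, Real.rpow_add hs]
    have e3 : s^(3*α) = s^α * s^α * s^α := by
      rw [show 3*α = α+(α+α) by ring, Real.rpow_add hs, Real.rpow_add hs]; ring
    have e4 : s^(4*α) = s^α * s^α * s^α * s^α := by
      rw [show 4*α = α+(α+(α+α)) by ring, Real.rpow_add hs, Real.rpow_add hs,
        Real.rpow_add hs]; ring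
    simp only
    rw [e2, e3, e4]
    ring
  have h1 := caputo_sum4 hα hα1 hf_g
  have h2 := caputo_sum4 hα hα1 h1
  rw [show (caputo α)^[2] g = caputo α (caputo α g) from rfl]
  refine tendsto_final hα h2 ?_
  -- final algebra
  have hX : (0:ℝ) < (2:ℝ)^α := Real.rpow_pos_of_pos two_pos α
  have h2a : (2:ℝ)^(2*α) = ((2:ℝ)^α)^2 := by
    rw [show 2*α = α+α by ring, Real.rpow_add two_pos, pow_two]
  have h2a1 : (2:ℝ)^(2*α+1) = 2 * ((2:ℝ)^α)^2 := by
    rw [Real.rpow_add two_pos, Real.rpow_one, h2a]; ring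
  have hnegα : (2:ℝ)^(-α) = ((2:ℝ)^α)⁻¹ := by
    rw [Real.rpow_neg (by norm_num : (0:ℝ) ≤ 2)]
  have hneg2 : (2:ℝ)^(-(2*α)) = (((2:ℝ)^α)^2)⁻¹ := by
    rw [Real.rpow_neg (by norm_num : (0:ℝ) ≤ 2), h2a]
  have nG1 : Gamma (1+α) ≠ 0 := (Gamma_pos_of_pos (by linarith)).ne'
  have nG2 : Gamma (1+2*α) ≠ 0 := (Gamma_pos_of_pos (by linarith)).ne'
  rw [hc₁, h2a1, h2a, hnegα, hneg2, show 2*α+1 = 1+2*α by ring, show α+1 = 1+α by ring]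
  field_simp
  ring
end
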